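/- The loop x(λ) = diag(λ, λ⁻¹) in ΛSL(2,ℂ) satisfies the reality condition (ρ̂x)(λ) := conj(x(conj λ)) = x(λ) of the first kind associated to SL(2,ℝ), lies in the identity component of ΛSL(2,ℂ), but does not lie in the big cell Λ⁻SL(2,ℂ)·Λ⁺SL(2,ℂ); hence the global Birkhoff decomposition fails for the non-compact real form SL(2,ℝ). -/

import Mathlib

/-!
If `diag(z, z⁻¹) = g₋(z⁻¹) g₊(z)` on the unit circle with `det g₋ = 1`, then
`g₊(z) = adj g₋(z⁻¹) · diag(z, z⁻¹)`, so each entry of the second column of `g₊` is, on the circle,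
`z⁻¹ a(z⁻¹)` with `a` holomorphic on the disc. By the mean value property and the invariance of
circle averages under `z ↦ z⁻¹`, its value at `0` equals the average of `z a(z)`, which is `0`.
So the second column of `g₊(0)` vanishes, contradicting `det g₊(0) = 1`.
-/

open Metric Set Matrix

/-- An element of `Λ⁺GL(2,ℂ)` via its holomorphic extension to the closed unit
disc. -/
def HolDisc (f : ℂ → Matrix (Fin 2) (Fin 2) ℂ) : Prop :=
  (∀ i j, ContinuousOn (fun z => f z i j) (Metric.closedBall 0 1)) ∧
    (∀ i j, DifferentiableOn ℂ (fun z => f z i j) (Metric.ball 0 1)) ∧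
    ∀ z ∈ Metric.closedBall (0 : ℂ) 1, IsUnit (f z)

theorem DiffContOnCl.apply_zero_eq_zero_of_eqOn_inv_mul_comp_inv {f g : ℂ → ℂ}
    (hf : DiffContOnCl ℂ f (ball 0 1)) (hg : DiffContOnCl ℂ g (ball 0 1))
    (hfg : EqOn f (fun z => z⁻¹ * g z⁻¹) (sphere 0 1)) : f 0 = 0 := by
  have hzg : DiffContOnCl ℂ (fun z => z * g z) (ball 0 |1|) := by
    simpa using differentiable_id.diffContOnCl.smul hg
  have hf : DiffContOnCl ℂ f (ball 0 |1|) := by simpa using hf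
  calc f 0 = Real.circleAverage f 0 1 := hf.circleAverage.symm
    _ = Real.circleAverage (fun z => z⁻¹ * g z⁻¹) 0 1 :=
      Real.circleAverage_congr_sphere (by rwa [abs_one])
    _ = Real.circleAverage (fun z => z * g z) 0 1 :=
      Real.circleAverage_zero_one_congr_inv (f := fun z => z * g z)
    _ = 0 := by simpa using hzg.circleAverage

theorem HolDisc.diffContOnCl {g : ℂ → Matrix (Fin 2) (Fin 2) ℂ} (hg : HolDisc g) (i j : Fin 2) :
    DiffContOnCl ℂ (fun z => g z i j) (ball 0 1) :=
  .mk_ball (hg.2.1 i j) (hg.1 i j)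

theorem HolDisc.diffContOnCl_adjugate {g : ℂ → Matrix (Fin 2) (Fin 2) ℂ} (hg : HolDisc g)
    (i j : Fin 2) : DiffContOnCl ℂ (fun z => adjugate (g z) i j) (ball 0 1) := by
  fin_cases i <;> fin_cases j <;>
    simp only [adjugate_fin_two, of_apply, cons_val', cons_val_zero, cons_val_one, empty_val',
      cons_val_fin_one, Fin.zero_eta, Fin.mk_one]
  exacts [hg.diffContOnCl 1 1, (hg.diffContOnCl 0 1).neg, (hg.diffContOnCl 1 0).neg,
    hg.diffContOnCl 0 0]

theorem eq_adjugate_mul_of_eq_mul {n R : Type*} [Fintype n] [DecidableEq n] [CommRing R]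
    {A M N : Matrix n n R} (hM : M.det = 1) (h : A = M * N) : N = adjugate M * A := by
  rw [h, ← Matrix.mul_assoc, adjugate_mul, hM, one_smul, Matrix.one_mul]

/-- At `t = 1` this is Whitehead's factorisation `diag(a, a⁻¹) = w(a) w(-1)` with
`w(a) = E₁₂(a) E₂₁(-a⁻¹) E₁₂(a)`, the two middle factors `E₁₂(z) E₁₂(-1)` merged. -/
noncomputable def diagContraction (t : ℝ) (z : ℂ) : Matrix (Fin 2) (Fin 2) ℂ :=
  transvection 0 1 (t * z) * transvection 1 0 (-(t * z⁻¹)) * transvection 0 1 (t * (z - 1)) *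
    transvection 1 0 (t : ℂ) * transvection 0 1 (-t : ℂ)

theorem diagContraction_zero (z : ℂ) : diagContraction 0 z = 1 := by
  simp [diagContraction]

theorem diagContraction_one {z : ℂ} (hz : z ≠ 0) :
    diagContraction 1 z = diagonal ![z, z⁻¹] := by
  ext i j
  fin_cases i <;> fin_cases j <;>
    simp [diagContraction, transvection, mul_apply, Fin.sum_univ_two, single_apply] <;>
    field_simp <;> ring

theorem det_diagContraction (t : ℝ) (z : ℂ) : (diagContraction t z).det = 1 := by
  simp [diagContraction, det_transvection_of_ne]

@[fun_prop]
theorem continuous_transvection {n R : Type*} [Fintype n] [DecidableEq n] [CommRing R]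
    [TopologicalSpace R] [IsTopologicalRing R] (i j : n) :
    Continuous fun c : R => transvection i j c :=
  continuous_const.add (continuous_matrix fun _ _ => by
    simp only [single_apply]; split_ifs <;> fun_prop)

theorem continuousOn_diagContraction :
    ContinuousOn (fun p : ℝ × ℂ => diagContraction p.1 p.2) {p | p.2 ≠ 0} := by
  have hinv : ContinuousOn (fun p : ℝ × ℂ => p.2⁻¹) {p | p.2 ≠ 0} :=
    continuousOn_snd.inv₀ fun _ hp => hp
  unfold diagContraction
  fun_prop

theorem diagonal_not_mem_bigCell :
    ¬ (∃ gm gp : ℂ → Matrix (Fin 2) (Fin 2) ℂ, HolDisc gm ∧ HolDisc gp ∧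
      (∀ z ∈ Metric.closedBall (0 : ℂ) 1, (gm z).det = 1 ∧ (gp z).det = 1) ∧
      ∀ z : ℂ, ‖z‖ = 1 → Matrix.diagonal ![z, z⁻¹] = gm z⁻¹ * gp z) := by
  rintro ⟨gm, gp, hgm, hgp, hdet, hfac⟩
  have hcol : ∀ i, gp 0 i 1 = 0 := fun i =>
    (hgp.diffContOnCl i 1).apply_zero_eq_zero_of_eqOn_inv_mul_comp_inv
      (hgm.diffContOnCl_adjugate i 1) fun z hz => by
        have hz : ‖z‖ = 1 := by simpa using hz
        have hdet_gm : (gm z⁻¹).det = 1 := (hdet _ (by simp [hz])).1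
        change gp z i 1 = z⁻¹ * adjugate (gm z⁻¹) i 1
        rw [eq_adjugate_mul_of_eq_mul hdet_gm (hfac z hz), mul_diagonal]
        simp [mul_comm]
  exact one_ne_zero <| (hdet 0 (by simp)).2.symm.trans (det_eq_zero_of_column_eq_zero 1 hcol)

/-- The loop `x(z) = diag(z, z⁻¹)` in `ΛSL(2,ℂ)`:
(a) satisfies the reality condition `conj(x(conj z)) = x(z)` of the first kind
    associated to `SL(2,ℝ)`;
(b) lies in the identity component of `ΛSL(2,ℂ)` (there is a continuous homotopy
    through `SL(2,ℂ)`-valued loops from the constant loop `I` to `x`);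
(c) is not in the big cell `Λ⁻SL(2,ℂ)·Λ⁺SL(2,ℂ)`: it admits no factorization
    `x(z) = gm(z⁻¹) · gp(z)` with `gm, gp` holomorphic on the closed disc with
    determinant `1`. -/
theorem stmt_9 :
    (∀ z : ℂ, ‖z‖ = 1 →
      (Matrix.diagonal ![star z, (star z)⁻¹]).map (starRingEnd ℂ)
        = Matrix.diagonal ![z, z⁻¹]) ∧
    (∃ H : ℝ → ℂ → Matrix (Fin 2) (Fin 2) ℂ,
      (∀ i j, ContinuousOn (fun p : ℝ × ℂ => H p.1 p.2 i j)
        (Set.Icc 0 1 ×ˢ Metric.sphere 0 1)) ∧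
      (∀ z : ℂ, ‖z‖ = 1 → H 0 z = 1 ∧ H 1 z = Matrix.diagonal ![z, z⁻¹]) ∧
      (∀ t ∈ Set.Icc (0 : ℝ) 1, ∀ z : ℂ, ‖z‖ = 1 → (H t z).det = 1)) ∧
    ¬ (∃ gm gp : ℂ → Matrix (Fin 2) (Fin 2) ℂ, HolDisc gm ∧ HolDisc gp ∧
      (∀ z ∈ Metric.closedBall (0 : ℂ) 1, (gm z).det = 1 ∧ (gp z).det = 1) ∧
      ∀ z : ℂ, ‖z‖ = 1 → Matrix.diagonal ![z, z⁻¹] = gm z⁻¹ * gp z) := by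
  refine ⟨fun z _ => ?_, ⟨diagContraction, fun i j => ?_, fun z hz => ?_,
    fun t _ z _ => det_diagContraction t z⟩, diagonal_not_mem_bigCell⟩
  · rw [diagonal_map (map_zero _)]
    congr 1
    ext i
    fin_cases i <;> simp [map_inv₀]
  · refine (continuous_id.matrix_elem i j).comp_continuousOn
      (continuousOn_diagContraction.mono fun p hp => ?_)
    exact ne_of_mem_sphere hp.2 one_ne_zero
  · exact ⟨diagContraction_zero z,
      diagContraction_one (norm_ne_zero_iff.mp (hz ▸ one_ne_zero))⟩
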